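/- arXiv:2001.05401 — 5 statements merged into one kernel-verified Lean document; each statement's English description precedes it below -/
import Mathlib

section
/- The smoothed Frobenius norm equals the infimal convolution: for all Z ∈ ℝ^{n×q}, min_{σ ≥ σ_min} (‖Z‖_F²/(2σ) + σ/2) = inf_Y (‖Z − Y‖_F + ‖Y‖_F²/(2σ_min) + σ_min/2). -/
open scoped BigOperators

/-- Frobenius norm of a real matrix. -/
noncomputable def frob {n q : ℕ} (Z : Matrix (Fin n) (Fin q) ℝ) : ℝ :=
  Real.sqrt (∑ i, ∑ j, (Z i j) ^ 2)

namespace FrobAux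

noncomputable def toE {n q : ℕ} (Z : Matrix (Fin n) (Fin q) ℝ) :
    EuclideanSpace ℝ (Fin n × Fin q) :=
  (WithLp.equiv 2 _).symm (fun p => Z p.1 p.2)

lemma frob_eq {n q : ℕ} (Z : Matrix (Fin n) (Fin q) ℝ) : frob Z = ‖toE Z‖ := by
  rw [EuclideanSpace.norm_eq, frob]
  congr 1
  rw [Fintype.sum_prod_type]
  refine Finset.sum_congr rfl fun i _ => Finset.sum_congr rfl fun j _ => ?_
  simp [toE, Real.norm_eq_abs, sq_abs]

lemma frob_nonneg {n q : ℕ} (Z : Matrix (Fin n) (Fin q) ℝ) : 0 ≤ frob Z :=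
  Real.sqrt_nonneg _

lemma frob_sub_ge {n q : ℕ} (Z Y : Matrix (Fin n) (Fin q) ℝ) :
    frob Z - frob Y ≤ frob (Z - Y) := by
  rw [frob_eq, frob_eq, frob_eq]
  have h : toE (Z - Y) = toE Z - toE Y := rfl
  rw [h]
  exact norm_sub_norm_le _ _

lemma frob_smul {n q : ℕ} (c : ℝ) (Z : Matrix (Fin n) (Fin q) ℝ) :
    frob (c • Z) = |c| * frob Z := by
  rw [frob_eq, frob_eq]
  have h : toE (c • Z) = c • toE Z := rfl
  rw [h, norm_smul, Real.norm_eq_abs]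

lemma frob_self_sub {n q : ℕ} (Z : Matrix (Fin n) (Fin q) ℝ) : frob (Z - Z) = 0 := by
  simp [frob]

end FrobAux

open FrobAux in
/-- The smoothed Frobenius norm (minimum over `σ ≥ σmin`) equals the infimal
convolution of the Frobenius norm with `Y ↦ ‖Y‖_F²/(2σmin) + σmin/2`. -/
theorem smoothed_frob_eq_infConv {n q : ℕ} (σmin : ℝ) (hσ : 0 < σmin)
    (Z : Matrix (Fin n) (Fin q) ℝ) :
    sInf {v : ℝ | ∃ σ : ℝ, σmin ≤ σ ∧ v = (frob Z) ^ 2 / (2 * σ) + σ / 2} =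
      sInf {v : ℝ | ∃ Y : Matrix (Fin n) (Fin q) ℝ,
        v = frob (Z - Y) + ((frob Y) ^ 2 / (2 * σmin) + σmin / 2)} := by
  set r := frob Z with hr
  have hr0 : 0 ≤ r := frob_nonneg Z
  rcases le_or_gt σmin r with h | h
  · -- case r ≥ σmin : both infima equal r
    have hrpos : 0 < r := lt_of_lt_of_le hσ h
    have h1 : IsLeast {v : ℝ | ∃ σ : ℝ, σmin ≤ σ ∧ v = r ^ 2 / (2 * σ) + σ / 2} r := by
      constructor
      · exact ⟨r, h, by field_simp; ring⟩
      · rintro v ⟨σ, hσσ, rfl⟩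
        have hσpos : 0 < σ := lt_of_lt_of_le hσ hσσ
        have key : r ^ 2 / (2 * σ) + σ / 2 - r = (r - σ) ^ 2 / (2 * σ) := by
          field_simp; ring
        have : 0 ≤ (r - σ) ^ 2 / (2 * σ) :=
          div_nonneg (sq_nonneg _) (by positivity)
        linarith
    have h2 : IsLeast {v : ℝ | ∃ Y : Matrix (Fin n) (Fin q) ℝ,
        v = frob (Z - Y) + ((frob Y) ^ 2 / (2 * σmin) + σmin / 2)} r := by
      constructor
      · refine ⟨(σmin / r) • Z, ?_⟩
        have hc : 0 ≤ σmin / r := div_nonneg hσ.le hr0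
        have hc1 : σmin / r ≤ 1 := (div_le_one hrpos).2 h
        have hY : frob ((σmin / r) • Z) = σmin := by
          rw [frob_smul, abs_of_nonneg hc, ← hr, div_mul_cancel₀ _ (ne_of_gt hrpos)]
        have hZY : Z - (σmin / r) • Z = (1 - σmin / r) • Z := by
          rw [sub_smul, one_smul]
        have hfZY : frob (Z - (σmin / r) • Z) = r - σmin := by
          rw [hZY, frob_smul, abs_of_nonneg (by linarith), ← hr, sub_mul, one_mul,
            div_mul_cancel₀ _ (ne_of_gt hrpos)]
        rw [hfZY, hY]
        field_simp
        ring
      · rintro v ⟨Y, rfl⟩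
        set t := frob Y with ht
        set d := frob (Z - Y) with hd
        have ht0 : 0 ≤ t := frob_nonneg Y
        have hdt : r - t ≤ d := frob_sub_ge Z Y
        have hd0 : 0 ≤ d := frob_nonneg _
        have key : t ^ 2 / (2 * σmin) + σmin / 2 - t = (t - σmin) ^ 2 / (2 * σmin) := by
          field_simp; ring
        have : 0 ≤ (t - σmin) ^ 2 / (2 * σmin) := div_nonneg (sq_nonneg _) (by positivity)
        linarith
    rw [h1.csInf_eq, h2.csInf_eq]
  · -- case r < σmin : both infima equal r²/(2σmin) + σmin/2
    set c := r ^ 2 / (2 * σmin) + σmin / 2 with hc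
    have h1 : IsLeast {v : ℝ | ∃ σ : ℝ, σmin ≤ σ ∧ v = r ^ 2 / (2 * σ) + σ / 2} c := by
      constructor
      · exact ⟨σmin, le_refl _, rfl⟩
      · rintro v ⟨σ, hσσ, rfl⟩
        have hσpos : 0 < σ := lt_of_lt_of_le hσ hσσ
        have hr2 : r ^ 2 ≤ σ * σmin := by nlinarith
        have key : r ^ 2 / (2 * σ) + σ / 2 - (r ^ 2 / (2 * σmin) + σmin / 2)
            = (σ - σmin) * (σ * σmin - r ^ 2) / (2 * σ * σmin) := by
          field_simp; ring
        have hnn : 0 ≤ (σ - σmin) * (σ * σmin - r ^ 2) / (2 * σ * σmin) :=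
          div_nonneg (mul_nonneg (by linarith) (by linarith)) (by positivity)
        rw [hc]
        linarith
    have h2 : IsLeast {v : ℝ | ∃ Y : Matrix (Fin n) (Fin q) ℝ,
        v = frob (Z - Y) + ((frob Y) ^ 2 / (2 * σmin) + σmin / 2)} c := by
      constructor
      · exact ⟨Z, by rw [frob_self_sub, hc, ← hr]; ring⟩
      · rintro v ⟨Y, rfl⟩
        set t := frob Y with ht
        set d := frob (Z - Y) with hd
        have ht0 : 0 ≤ t := frob_nonneg Y
        have hdt : r - t ≤ d := frob_sub_ge Z Y
        have hd0 : 0 ≤ d := frob_nonneg _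
        have hkey : r ^ 2 ≤ 2 * σmin * d + t ^ 2 := by
          rcases le_total t r with h' | h'
          · nlinarith
          · nlinarith
        have hpos : (0:ℝ) < 2 * σmin := by positivity
        rw [hc]
        have expand : (d + t ^ 2 / (2 * σmin)) * (2 * σmin) = 2 * σmin * d + t ^ 2 := by
          field_simp
        have : r ^ 2 / (2 * σmin) ≤ d + t ^ 2 / (2 * σmin) := by
          rw [div_le_iff₀ hpos, expand]; exact hkey
        linarith
    rw [h1.csInf_eq, h2.csInf_eq]
end

section
/- Let f : ℝ^{n×q} → ℝ be proper convex lower semicontinuous, X ∈ ℝ^{n×p}, Y ∈ ℝ^{n×q}, λ > 0, and let B̂ minimize B ↦ f(Y − XB) + λ‖B‖_{2,1}, where ‖B‖_{2,1} is the sum of Euclidean norms of the rows. Let B* ∈ ℝ^{p×q} with row support S*, set Δ = B̂ − B*, and suppose there exists Z in the subdifferential of f at Y − XB* with ‖XᵀZ‖_{2,∞} ≤ λ/2 (where ‖·‖_{2,∞} is the maximum row Euclidean norm). Then ‖Δ_{S*ᶜ}‖_{2,1} ≤ 3‖Δ_{S*}‖_{2,1}. -/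
/-! Comparing the minimality of `B̂` with `B*`, and the subgradient inequality at `Y - X B*` with
`Y - X B̂`, sandwiches `f (Y - X B̂) - f (Y - X B*)` between `-⟪XᵀZ, Δ⟫ ≥ -(λ/2) ‖Δ‖_{2,1}` and
`λ (‖B*‖_{2,1} - ‖B̂‖_{2,1}) ≤ λ (‖Δ_{S*}‖_{2,1} - ‖Δ_{S*ᶜ}‖_{2,1})`. As
`‖Δ‖_{2,1} = ‖Δ_{S*}‖_{2,1} + ‖Δ_{S*ᶜ}‖_{2,1}`, dividing by `λ` gives the cone condition. -/

open scoped BigOperators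
open Matrix Classical

/-- Euclidean norm of a row. -/
noncomputable def rowNorm {q : ℕ} (v : Fin q → ℝ) : ℝ := Real.sqrt (∑ j, (v j) ^ 2)

/-- `ℓ_{2,1}` norm: sum of row Euclidean norms. -/
noncomputable def norm21 {p q : ℕ} (B : Matrix (Fin p) (Fin q) ℝ) : ℝ :=
  ∑ j, rowNorm (B j)

/-- `ℓ_{2,∞}` norm: maximum of row Euclidean norms. -/
noncomputable def norm2inf {p q : ℕ} (B : Matrix (Fin p) (Fin q) ℝ) : ℝ :=
  ⨆ j, rowNorm (B j)

/-- Restriction of a matrix to a set of rows (zero outside `S`). -/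
noncomputable def restrict {p q : ℕ} (B : Matrix (Fin p) (Fin q) ℝ) (S : Set (Fin p)) :
    Matrix (Fin p) (Fin q) ℝ :=
  fun j k => if j ∈ S then B j k else 0

/-- `Z` is a subgradient of `f` at `E`. -/
def InSubdiff {n q : ℕ} (f : Matrix (Fin n) (Fin q) ℝ → ℝ)
    (E Z : Matrix (Fin n) (Fin q) ℝ) : Prop :=
  ∀ A, f A - f E ≥ ∑ i, ∑ j, Z i j * (A i j - E i j)

lemma rowNorm_eq_norm {q : ℕ} (v : Fin q → ℝ) : rowNorm v = ‖WithLp.toLp 2 v‖ := by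
  simp [rowNorm, EuclideanSpace.norm_eq, Real.norm_eq_abs, sq_abs]

lemma rowNorm_nonneg {q : ℕ} (v : Fin q → ℝ) : 0 ≤ rowNorm v := Real.sqrt_nonneg _

lemma rowNorm_zero {q : ℕ} : rowNorm (0 : Fin q → ℝ) = 0 := by
  simp [rowNorm]

lemma rowNorm_sub_comm {q : ℕ} (u v : Fin q → ℝ) : rowNorm (u - v) = rowNorm (v - u) := by
  simp only [rowNorm_eq_norm, WithLp.toLp_sub, norm_sub_rev]

lemma rowNorm_sub_rowNorm_le {q : ℕ} (u v : Fin q → ℝ) :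
    rowNorm u - rowNorm v ≤ rowNorm (u - v) := by
  simpa only [rowNorm_eq_norm, WithLp.toLp_sub] using norm_sub_norm_le _ _

lemma sum_mul_le_rowNorm_mul_rowNorm {q : ℕ} (u v : Fin q → ℝ) :
    ∑ j, u j * v j ≤ rowNorm u * rowNorm v := by
  have h := real_inner_le_norm (WithLp.toLp 2 u) (WithLp.toLp 2 v)
  simpa [rowNorm_eq_norm, PiLp.inner_apply, mul_comm] using h

lemma rowNorm_le_norm2inf {p q : ℕ} (B : Matrix (Fin p) (Fin q) ℝ) (k : Fin p) :
    rowNorm (B k) ≤ norm2inf B :=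
  le_ciSup (f := fun j => rowNorm (B j)) (Set.finite_range _).bddAbove k

lemma norm21_nonneg {p q : ℕ} (B : Matrix (Fin p) (Fin q) ℝ) : 0 ≤ norm21 B :=
  Finset.sum_nonneg fun j _ => rowNorm_nonneg (B j)

lemma rowNorm_restrict {p q : ℕ} (B : Matrix (Fin p) (Fin q) ℝ) (S : Set (Fin p)) (j : Fin p) :
    rowNorm (restrict B S j) = if j ∈ S then rowNorm (B j) else 0 := by
  by_cases hj : j ∈ S <;> simp [restrict, rowNorm, hj]

lemma norm21_restrict {p q : ℕ} (B : Matrix (Fin p) (Fin q) ℝ) (S : Set (Fin p)) :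
    norm21 (restrict B S) = ∑ j, if j ∈ S then rowNorm (B j) else 0 :=
  Finset.sum_congr rfl fun j _ => rowNorm_restrict B S j

lemma norm21_restrict_add_restrict_compl {p q : ℕ} (B : Matrix (Fin p) (Fin q) ℝ)
    (S : Set (Fin p)) : norm21 (restrict B S) + norm21 (restrict B Sᶜ) = norm21 B := by
  rw [norm21_restrict, norm21_restrict, ← Finset.sum_add_distrib]
  refine Finset.sum_congr rfl fun j _ => ?_
  by_cases hj : j ∈ S <;> simp [hj]

lemma sum_mul_le_norm2inf_mul_norm21 {p q : ℕ} (A B : Matrix (Fin p) (Fin q) ℝ) :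
    ∑ k, ∑ j, A k j * B k j ≤ norm2inf A * norm21 B := by
  rw [norm21, Finset.mul_sum]
  refine Finset.sum_le_sum fun k _ => ?_
  exact (sum_mul_le_rowNorm_mul_rowNorm (A k) (B k)).trans <|
    mul_le_mul_of_nonneg_right (rowNorm_le_norm2inf A k) (rowNorm_nonneg (B k))

lemma sum_mul_mul_apply_eq_sum_transpose_mul_apply_mul {m n q : Type*} [Fintype m] [Fintype n]
    [Fintype q] (Z : Matrix m q ℝ) (X : Matrix m n ℝ) (D : Matrix n q ℝ) :
    ∑ i, ∑ j, Z i j * (X * D) i j = ∑ k, ∑ j, (Xᵀ * Z) k j * D k j := by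
  simp only [Matrix.mul_apply, Matrix.transpose_apply, Finset.mul_sum, Finset.sum_mul]
  rw [Finset.sum_comm]
  refine (Finset.sum_congr rfl fun j _ => Finset.sum_comm).trans ?_
  rw [Finset.sum_comm]
  exact Finset.sum_congr rfl fun k _ => Finset.sum_congr rfl fun j _ =>
    Finset.sum_congr rfl fun i _ => by ring

lemma InSubdiff.neg_norm2inf_mul_norm21_le {n p q : ℕ} {f : Matrix (Fin n) (Fin q) ℝ → ℝ}
    {X : Matrix (Fin n) (Fin p) ℝ} {Y Z : Matrix (Fin n) (Fin q) ℝ}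
    {B : Matrix (Fin p) (Fin q) ℝ} (hZ : InSubdiff f (Y - X * B) Z)
    (B' : Matrix (Fin p) (Fin q) ℝ) :
    -(norm2inf (Xᵀ * Z) * norm21 (B' - B)) ≤ f (Y - X * B') - f (Y - X * B) := by
  have hpair : ∑ i, ∑ j, Z i j * ((Y - X * B') i j - (Y - X * B) i j)
      = -∑ k, ∑ j, (Xᵀ * Z) k j * (B' - B) k j := by
    rw [← sum_mul_mul_apply_eq_sum_transpose_mul_apply_mul, ← Finset.sum_neg_distrib]
    refine Finset.sum_congr rfl fun i _ => ?_
    rw [← Finset.sum_neg_distrib]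
    refine Finset.sum_congr rfl fun j _ => ?_
    simp only [Matrix.mul_sub, Matrix.sub_apply]
    ring
  have := hZ (Y - X * B')
  rw [hpair] at this
  linarith [sum_mul_le_norm2inf_mul_norm21 (Xᵀ * Z) (B' - B)]

/-- Rows off the support of `B` pay their full length, rows on it at most the triangle
inequality defect. -/
lemma norm21_sub_norm21_le_restrict_support {p q : ℕ} (B B' : Matrix (Fin p) (Fin q) ℝ) :
    norm21 B - norm21 B' ≤
      norm21 (restrict (B' - B) {j | B j ≠ 0}) - norm21 (restrict (B' - B) {j | B j = 0}) := by
  rw [norm21_restrict, norm21_restrict, norm21, norm21, ← Finset.sum_sub_distrib,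
    ← Finset.sum_sub_distrib]
  refine Finset.sum_le_sum fun j _ => ?_
  have hrow : (B' - B) j = B' j - B j := rfl
  by_cases hj : B j = 0
  · simp [hj, hrow, rowNorm_zero]
  · have := rowNorm_sub_rowNorm_le (B j) (B' j)
    rw [rowNorm_sub_comm] at this
    simp only [ne_eq, Set.mem_ofPred_eq, hj, not_false_eq_true, ↓reduceIte, hrow]
    linarith

theorem cone_condition_general {n p q : ℕ}
    (f : Matrix (Fin n) (Fin q) ℝ → ℝ)
    (X : Matrix (Fin n) (Fin p) ℝ) (Y : Matrix (Fin n) (Fin q) ℝ)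
    (lam : ℝ) (hlam : 0 < lam)
    (Bhat Bstar : Matrix (Fin p) (Fin q) ℝ)
    (hmin : ∀ B : Matrix (Fin p) (Fin q) ℝ,
      f (Y - X * Bhat) + lam * norm21 Bhat ≤ f (Y - X * B) + lam * norm21 B)
    (Z : Matrix (Fin n) (Fin q) ℝ)
    (hZ : InSubdiff f (Y - X * Bstar) Z)
    (hdual : norm2inf (Xᵀ * Z) ≤ lam / 2) :
    norm21 (restrict (Bhat - Bstar) {j | Bstar j = 0}) ≤
      3 * norm21 (restrict (Bhat - Bstar) {j | Bstar j ≠ 0}) := by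
  set offSupport := norm21 (restrict (Bhat - Bstar) {j | Bstar j = 0})
  set onSupport := norm21 (restrict (Bhat - Bstar) {j | Bstar j ≠ 0})
  have hsplit : offSupport + onSupport = norm21 (Bhat - Bstar) :=
    norm21_restrict_add_restrict_compl (Bhat - Bstar) {j | Bstar j = 0}
  have hsubgrad :
      -(lam / 2 * (offSupport + onSupport)) ≤ f (Y - X * Bhat) - f (Y - X * Bstar) := by
    rw [hsplit]
    refine le_trans ?_ (hZ.neg_norm2inf_mul_norm21_le Bhat)
    exact neg_le_neg (mul_le_mul_of_nonneg_right hdual (norm21_nonneg _))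
  have hopt : f (Y - X * Bhat) - f (Y - X * Bstar) ≤ lam * (onSupport - offSupport) :=
    calc f (Y - X * Bhat) - f (Y - X * Bstar) ≤ lam * (norm21 Bstar - norm21 Bhat) := by
          linarith [hmin Bstar]
      _ ≤ lam * (onSupport - offSupport) :=
          mul_le_mul_of_nonneg_left (norm21_sub_norm21_le_restrict_support Bstar Bhat) hlam.le
  have hscaled : lam * (-(offSupport + onSupport) / 2) ≤ lam * (onSupport - offSupport) := by
    linarith
  linarith [le_of_mul_le_mul_left hscaled hlam]

/-- Cone condition for the generic group-Lasso problem: if `B̂` minimizes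
`B ↦ f(Y − XB) + λ‖B‖_{2,1}` and there is a subgradient `Z ∈ ∂f(Y − XB*)`
with `‖XᵀZ‖_{2,∞} ≤ λ/2`, then `‖Δ_{S*ᶜ}‖_{2,1} ≤ 3‖Δ_{S*}‖_{2,1}`. -/
theorem cone_condition {n p q : ℕ}
    (f : Matrix (Fin n) (Fin q) ℝ → ℝ)
    (hconv : ConvexOn ℝ Set.univ f) (hlsc : LowerSemicontinuous f)
    (X : Matrix (Fin n) (Fin p) ℝ) (Y : Matrix (Fin n) (Fin q) ℝ)
    (lam : ℝ) (hlam : 0 < lam)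
    (Bhat Bstar : Matrix (Fin p) (Fin q) ℝ)
    (hmin : ∀ B : Matrix (Fin p) (Fin q) ℝ,
      f (Y - X * Bhat) + lam * norm21 Bhat ≤ f (Y - X * B) + lam * norm21 B)
    (Z : Matrix (Fin n) (Fin q) ℝ)
    (hZ : InSubdiff f (Y - X * Bstar) Z)
    (hdual : norm2inf (Xᵀ * Z) ≤ lam / 2) :
    norm21 (restrict (Bhat - Bstar) {j | Bstar j = 0}) ≤
      3 * norm21 (restrict (Bhat - Bstar) {j | Bstar j ≠ 0}) :=
  cone_condition_general f X Y lam hlam Bhat Bstar hmin Z hZ hdual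
end

section
/- Under mutual incoherence (as above with parameters α > 1, s ≥ 1) and the cone condition ‖Δ_{S*ᶜ}‖_{2,1} ≤ 3‖Δ_{S*}‖_{2,1} with |S*| ≤ s, one has ‖Δ‖_{2,1} ≤ (α/(α−1))·16s·‖ΨΔ‖_{2,∞}. -/
open scoped BigOperators
open Matrix Classical

/-- Mutual incoherence of the Gram matrix `Ψ = XᵀX/n`. -/
def MutualIncoherence {p : ℕ} (Ψ : Matrix (Fin p) (Fin p) ℝ) (α : ℝ) (s : ℕ) : Prop :=
  (∀ j, Ψ j j = 1) ∧ ∀ j j' : Fin p, j ≠ j' → |Ψ j j'| ≤ 1 / (7 * α * s)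

set_option maxHeartbeats 1000000 in
/-- Under mutual incoherence and the cone condition,
`‖Δ‖_{2,1} ≤ (α/(α−1))·16s·‖ΨΔ‖_{2,∞}`. -/
theorem norm21_bound {n p q : ℕ} (hn : 0 < n)
    (X : Matrix (Fin n) (Fin p) ℝ) (α : ℝ) (hα : 1 < α) (s : ℕ) (hs : 1 ≤ s)
    (hinc : MutualIncoherence ((1 / (n : ℝ)) • (Xᵀ * X)) α s)
    (Sstar : Set (Fin p)) (hcard : Sstar.ncard ≤ s)
    (Δ : Matrix (Fin p) (Fin q) ℝ)
    (hcone : norm21 (restrict Δ Sstarᶜ) ≤ 3 * norm21 (restrict Δ Sstar)) :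
    norm21 Δ ≤
      (α / (α - 1)) * 16 * s * norm2inf (((1 / (n : ℝ)) • (Xᵀ * X)) * Δ) := by
  classical
  obtain ⟨hdiag, hoff⟩ := hinc
  set Ψ : Matrix (Fin p) (Fin p) ℝ := (1 / (n : ℝ)) • (Xᵀ * X) with hΨ
  set N : ℝ := norm2inf (Ψ * Δ) with hNdef
  set r : Fin p → ℝ := fun j => rowNorm (Δ j) with hrdef
  have hα0 : (0:ℝ) < α := lt_trans one_pos hα
  have hsR : (1:ℝ) ≤ (s:ℝ) := by exact_mod_cast hs
  have hs0 : (0:ℝ) < (s:ℝ) := lt_of_lt_of_le one_pos hsR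
  have hr0 : ∀ j, 0 ≤ r j := fun j => Real.sqrt_nonneg _
  have hfin : Sstar.Finite := Sstar.toFinite
  set T : Finset (Fin p) := hfin.toFinset with hTdef
  have hmemT : ∀ j, j ∈ T ↔ j ∈ Sstar := fun j => hfin.mem_toFinset
  have hTcard : (T.card : ℝ) ≤ (s:ℝ) := by
    have h1 : Sstar.ncard = T.card := Set.ncard_eq_toFinset_card Sstar hfin
    have : T.card ≤ s := by omega
    exact_mod_cast this
  -- row norms of restrictions
  have hres : ∀ (S : Set (Fin p)) (j : Fin p),
      rowNorm (restrict Δ S j) = if j ∈ S then r j else 0 := by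
    intro S j
    by_cases h : j ∈ S
    · simp [rowNorm, restrict, h, hrdef]
    · simp [rowNorm, restrict, h]
  have hrow_sq : ∀ j, (r j)^2 = ∑ k, (Δ j k)^2 := fun j =>
    Real.sq_sqrt (Finset.sum_nonneg fun k _ => sq_nonneg _)
  set L : ℝ := norm21 Δ with hLdef
  set A : ℝ := ∑ j ∈ T, r j with hAdef
  have hAnn : 0 ≤ A := Finset.sum_nonneg fun j _ => hr0 j
  have hLsum : L = ∑ j, r j := rfl
  have hAeq : norm21 (restrict Δ Sstar) = A := by
    rw [hAdef]
    unfold norm21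
    simp only [hres Sstar]
    rw [← Finset.sum_filter]
    apply Finset.sum_congr _ (fun _ _ => rfl)
    ext j
    simp [hmemT]
  have hsplit : L = norm21 (restrict Δ Sstar) + norm21 (restrict Δ Sstarᶜ) := by
    rw [hLdef]
    unfold norm21
    rw [← Finset.sum_add_distrib]
    refine Finset.sum_congr rfl fun j _ => ?_
    rw [hres Sstar j, hres Sstarᶜ j]
    by_cases h : j ∈ Sstar <;> simp [h, hrdef]
  have hL4 : L ≤ 4 * A := by
    rw [hsplit, hAeq]
    have := hcone
    rw [hAeq] at this
    linarith
  set F2 : ℝ := ∑ j ∈ T, (r j)^2 with hF2def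
  have hF2nn : 0 ≤ F2 := Finset.sum_nonneg fun j _ => sq_nonneg _
  set F : ℝ := Real.sqrt F2 with hFdef
  have hFnn : 0 ≤ F := Real.sqrt_nonneg _
  have hFF : F * F = F2 := Real.mul_self_sqrt hF2nn
  have hA2 : A^2 ≤ (s:ℝ) * F2 := by
    have h1 : A^2 ≤ (T.card : ℝ) * F2 := by
      have := sq_sum_le_card_mul_sum_sq (s := T) (f := r)
      exact_mod_cast this
    have h2 : (T.card : ℝ) * F2 ≤ (s:ℝ) * F2 := mul_le_mul_of_nonneg_right hTcard hF2nn
    linarith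
  have hAF : A ≤ Real.sqrt s * F := by
    have h1 : A = Real.sqrt (A^2) := (Real.sqrt_sq hAnn).symm
    rw [h1]
    calc Real.sqrt (A^2) ≤ Real.sqrt ((s:ℝ) * F2) := Real.sqrt_le_sqrt hA2
      _ = Real.sqrt s * F := by rw [Real.sqrt_mul (le_of_lt hs0)]
  -- N is nonnegative
  have hN0 : 0 ≤ N := by
    rcases Nat.eq_zero_or_pos p with hp | hp
    · subst hp
      have : IsEmpty (Fin 0) := inferInstance
      rw [hNdef]
      unfold norm2inf
      rw [Real.iSup_of_isEmpty]
    · have j : Fin p := ⟨0, hp⟩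
      have hb : BddAbove (Set.range fun j => rowNorm ((Ψ * Δ) j)) :=
        (Set.finite_range _).bddAbove
      exact le_trans (Real.sqrt_nonneg _) (le_ciSup hb j)
  have hrowM : ∀ j, rowNorm ((Ψ * Δ) j) ≤ N := by
    intro j
    have hb : BddAbove (Set.range fun j => rowNorm ((Ψ * Δ) j)) :=
      (Set.finite_range _).bddAbove
    exact le_ciSup hb j
  -- inner products of rows
  set c : Fin p → Fin p → ℝ := fun j j' => ∑ k, Δ j k * Δ j' k with hcdef
  have hc : ∀ j j', |c j j'| ≤ r j * r j' := by
    intro j j'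
    have h1 : |c j j'| ≤ ∑ k, |Δ j k| * |Δ j' k| := by
      refine (Finset.abs_sum_le_sum_abs _ _).trans ?_
      refine Finset.sum_le_sum fun k _ => ?_
      rw [abs_mul]
    have h2 : ∑ k, |Δ j k| * |Δ j' k| ≤
        Real.sqrt (∑ k, |Δ j k|^2) * Real.sqrt (∑ k, |Δ j' k|^2) :=
      Real.sum_mul_le_sqrt_mul_sqrt _ _ _
    have h3 : Real.sqrt (∑ k, |Δ j k|^2) * Real.sqrt (∑ k, |Δ j' k|^2) = r j * r j' := by
      simp only [sq_abs]
      rfl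
    linarith
  -- row expansion of the inner product with Ψ Δ
  have hIrow : ∀ j : Fin p, (∑ k, Δ j k * (Ψ * Δ) j k)
      = c j j + ∑ j' ∈ Finset.univ.erase j, Ψ j j' * c j j' := by
    intro j
    have h1 : (∑ k, Δ j k * (Ψ * Δ) j k) = ∑ j', Ψ j j' * c j j' := by
      calc ∑ k, Δ j k * (Ψ * Δ) j k
          = ∑ k, ∑ j', Δ j k * (Ψ j j' * Δ j' k) := by
            refine Finset.sum_congr rfl fun k _ => ?_
            rw [Matrix.mul_apply, Finset.mul_sum]
        _ = ∑ j', ∑ k, Δ j k * (Ψ j j' * Δ j' k) := Finset.sum_comm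
        _ = ∑ j', Ψ j j' * c j j' := by
            refine Finset.sum_congr rfl fun j' _ => ?_
            rw [hcdef]
            simp only []
            rw [Finset.mul_sum]
            exact Finset.sum_congr rfl fun k _ => by ring
    rw [h1, ← Finset.add_sum_erase _ _ (Finset.mem_univ j), hdiag j, one_mul]
  -- tail bound per row
  have htail : ∀ j ∈ T, -((1/(7*α*s)) * (r j * L)) ≤ ∑ j' ∈ Finset.univ.erase j, Ψ j j' * c j j' := by
    intro j _
    have hstep : ∀ j' ∈ Finset.univ.erase j, -((1/(7*α*s)) * (r j * r j')) ≤ Ψ j j' * c j j' := by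
      intro j' hj'
      have hne : j ≠ j' := (Finset.ne_of_mem_erase hj').symm
      have habs : |Ψ j j' * c j j'| ≤ (1/(7*α*s)) * (r j * r j') := by
        rw [abs_mul]
        have hpos : (0:ℝ) < 7*α*s := by nlinarith
        exact mul_le_mul (hoff j j' hne) (hc j j') (abs_nonneg _)
          (le_of_lt (one_div_pos.mpr hpos))
      linarith [neg_abs_le (Ψ j j' * c j j')]
    have h1 : ∑ j' ∈ Finset.univ.erase j, -((1/(7*α*s)) * (r j * r j'))
        ≤ ∑ j' ∈ Finset.univ.erase j, Ψ j j' * c j j' := Finset.sum_le_sum hstep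
    have h2 : ∑ j' ∈ Finset.univ.erase j, -((1/(7*α*s)) * (r j * r j'))
        = (-((1/(7*α*s)) * r j)) * ∑ j' ∈ Finset.univ.erase j, r j' := by
      rw [Finset.mul_sum]
      exact Finset.sum_congr rfl fun j' _ => by ring
    have h3 : ∑ j' ∈ Finset.univ.erase j, r j' ≤ L := by
      rw [hLsum]
      exact Finset.sum_le_sum_of_subset_of_nonneg (Finset.subset_univ _)
        (fun j' _ _ => hr0 j')
    have h4 : (-((1/(7*α*s)) * r j)) * L ≤ (-((1/(7*α*s)) * r j)) * ∑ j' ∈ Finset.univ.erase j, r j' := by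
      apply mul_le_mul_of_nonpos_left h3
      have hpos : (0:ℝ) < 7*α*s := by nlinarith
      have : (0:ℝ) ≤ (1/(7*α*s)) * r j := mul_nonneg (le_of_lt (one_div_pos.mpr hpos)) (hr0 j)
      linarith
    calc -((1/(7*α*s)) * (r j * L)) = (-((1/(7*α*s)) * r j)) * L := by ring
      _ ≤ (-((1/(7*α*s)) * r j)) * ∑ j' ∈ Finset.univ.erase j, r j' := h4
      _ = ∑ j' ∈ Finset.univ.erase j, -((1/(7*α*s)) * (r j * r j')) := h2.symm
      _ ≤ _ := h1
  -- lower bound for the inner product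
  set I : ℝ := ∑ j ∈ T, ∑ k, Δ j k * (Ψ * Δ) j k with hIdef
  have hIlow : F2 - (1/(7*α*s)) * (A * L) ≤ I := by
    have h1 : ∀ j ∈ T, (r j)^2 - (1/(7*α*s)) * (r j * L) ≤ ∑ k, Δ j k * (Ψ * Δ) j k := by
      intro j hj
      rw [hIrow j]
      have hcjj : c j j = (r j)^2 := by
        rw [hrow_sq j]
        exact Finset.sum_congr rfl fun k _ => (pow_two _).symm
      rw [hcjj]
      linarith [htail j hj]
    calc F2 - (1/(7*α*s)) * (A * L)
        = ∑ j ∈ T, ((r j)^2 - (1/(7*α*s)) * (r j * L)) := by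
          rw [Finset.sum_sub_distrib, hF2def, hAdef, Finset.sum_mul, Finset.mul_sum]
      _ ≤ I := Finset.sum_le_sum h1
  -- upper bound for the inner product
  have hIup : I ≤ A * N := by
    have h1 : ∀ j ∈ T, (∑ k, Δ j k * (Ψ * Δ) j k) ≤ r j * N := by
      intro j _
      calc ∑ k, Δ j k * (Ψ * Δ) j k
          ≤ Real.sqrt (∑ k, (Δ j k)^2) * Real.sqrt (∑ k, ((Ψ * Δ) j k)^2) :=
            Real.sum_mul_le_sqrt_mul_sqrt _ _ _
        _ = r j * rowNorm ((Ψ * Δ) j) := rfl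
        _ ≤ r j * N := mul_le_mul_of_nonneg_left (hrowM j) (hr0 j)
    calc I ≤ ∑ j ∈ T, r j * N := Finset.sum_le_sum h1
      _ = A * N := by rw [hAdef, Finset.sum_mul]
  -- combine
  have hκs : (1/(7*α*s)) * (4 * ((s:ℝ) * F2)) = (4/(7*α)) * F2 := by
    field_simp
  have hE : (1/(7*α*s)) * (A * L) ≤ (4/(7*α)) * F2 := by
    have hκ : (0:ℝ) ≤ 1/(7*α*s) := le_of_lt (one_div_pos.mpr (by nlinarith))
    calc (1/(7*α*s)) * (A * L) ≤ (1/(7*α*s)) * (A * (4 * A)) :=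
          mul_le_mul_of_nonneg_left (mul_le_mul_of_nonneg_left hL4 hAnn) hκ
      _ ≤ (1/(7*α*s)) * (4 * ((s:ℝ) * F2)) := by
          apply mul_le_mul_of_nonneg_left _ hκ
          nlinarith [hA2]
      _ = (4/(7*α)) * F2 := hκs
  have hANFN : A * N ≤ Real.sqrt s * F * N := mul_le_mul_of_nonneg_right hAF hN0
  have hmain : F2 ≤ Real.sqrt s * F * N + (4/(7*α)) * F2 := by linarith
  have h7α : (0:ℝ) < 7*α := by linarith
  have h4eq : 7*α*((4/(7*α)) * F2) = 4 * F2 := by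
    field_simp
  have hm' := mul_le_mul_of_nonneg_left hmain (le_of_lt h7α)
  rw [mul_add] at hm'
  have hmain7 : (7*α-4) * F2 ≤ 7*α*(Real.sqrt s * F * N) := by linarith
  have hLu : L ≤ 4 * (Real.sqrt s * F) := by
    calc L ≤ 4 * A := hL4
      _ ≤ 4 * (Real.sqrt s * F) := by linarith [hAF]
  have hss : Real.sqrt s * Real.sqrt s = (s:ℝ) := Real.mul_self_sqrt (le_of_lt hs0)
  have hRHS : (α / (α - 1)) * 16 * (s:ℝ) * N = (α * 16 * s * N) / (α - 1) := by ring
  rw [hRHS, le_div_iff₀ (by linarith : (0:ℝ) < α - 1)]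
  rcases eq_or_lt_of_le hFnn with hF0 | hFpos
  · -- F = 0
    have hF2z : F2 = 0 := by rw [← hFF, ← hF0]; ring
    have hAz : A ≤ 0 := by nlinarith [hA2]
    have hLz : L ≤ 0 := by linarith
    have hRnn : (0:ℝ) ≤ α * 16 * s * N := by
      have : (0:ℝ) ≤ α * 16 * s := by nlinarith
      exact mul_nonneg this hN0
    nlinarith
  · have key : (7*α-4) * F ≤ 7*α*(Real.sqrt s * N) := by
      have h : ((7*α-4) * F) * F ≤ (7*α*(Real.sqrt s * N)) * F := by
        have e1 : ((7*α-4) * F) * F = (7*α-4) * F2 := by rw [← hFF]; ring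
        have e2 : (7*α*(Real.sqrt s * N)) * F = 7*α*(Real.sqrt s * F * N) := by ring
        rw [e1, e2]
        exact hmain7
      exact le_of_mul_le_mul_right h hFpos
    have keyS : (7*α-4) * (Real.sqrt s * F) ≤ 7*α*((s:ℝ)*N) := by
      have h := mul_le_mul_of_nonneg_left key (Real.sqrt_nonneg (s:ℝ))
      calc (7*α-4) * (Real.sqrt s * F) = Real.sqrt s * ((7*α-4) * F) := by ring
        _ ≤ Real.sqrt s * (7*α*(Real.sqrt s * N)) := h
        _ = (Real.sqrt s * Real.sqrt s) * (7*α*N) := by ring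
        _ = 7*α*((s:ℝ)*N) := by rw [hss]; ring
    have hu0 : (0:ℝ) ≤ Real.sqrt s * F := mul_nonneg (Real.sqrt_nonneg _) hFnn
    have hsN : (0:ℝ) ≤ (s:ℝ) * N := mul_nonneg (le_of_lt hs0) hN0
    nlinarith [mul_le_mul_of_nonneg_left keyS (by linarith : (0:ℝ) ≤ α - 1),
      mul_le_mul_of_nonneg_left hLu (by nlinarith : (0:ℝ) ≤ (α-1)*(7*α-4)),
      mul_nonneg (le_of_lt hα0) hsN]
end

section
/- For a full-rank matrix A ∈ ℝ^{n×q} with n ≤ q (so AAᵀ is invertible), the subdifferential of the nuclear norm at A is the singleton {(AAᵀ)^{−1/2} A}. -/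
open scoped BigOperators
open Matrix Classical

open scoped ComplexOrder in
/-- The positive semidefinite square root of a positive semidefinite matrix
(the definition `Matrix.PosSemidef.sqrt` of the older Mathlib, since removed). -/
noncomputable def Matrix.PosSemidef.sqrt {m 𝕜 : Type*} [Fintype m] [DecidableEq m] [RCLike 𝕜]
    {A : Matrix m m 𝕜} (hA : A.PosSemidef) : Matrix m m 𝕜 :=
  (hA.1.eigenvectorUnitary : Matrix m m 𝕜) * diagonal ((↑) ∘ (√·) ∘ hA.1.eigenvalues) *
    (star hA.1.eigenvectorUnitary : Matrix m m 𝕜)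

/-- Nuclear norm of a real matrix: trace of the positive square root of `AAᵀ`
(i.e. the sum of the singular values). -/
noncomputable def nuclearNorm {n q : ℕ} (A : Matrix (Fin n) (Fin q) ℝ) : ℝ :=
  ((Matrix.posSemidef_self_mul_conjTranspose A).sqrt).trace

/-!
Write `S = √(AAᵀ)` and `W = S⁻¹A`, so that `A = SW` and `WWᵀ = 1`. As the nuclear norm is
positively homogeneous, `Z` is a subgradient at `A` iff `⟨Z, A⟩ = ‖A‖_*` and `⟨Z, B⟩ ≤ ‖B‖_*`
for all `B`, where `⟨Z, B⟩ = tr (ZBᵀ)`. Testing on rank-one `B = u (Zᵀu)ᵀ`, and conversely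
evaluating `tr (ZBᵀ)` in an eigenbasis of `√(BBᵀ)`, the second condition says exactly that
`‖Zᵀu‖ ≤ ‖u‖` for all `u`. `W` satisfies both conditions. Conversely, in an orthonormal
eigenbasis `(bᵢ, λᵢ)` of `S`, `⟨Z, A⟩ = ∑ λᵢ ⟪Zᵀbᵢ, Wᵀbᵢ⟫ ≤ ∑ λᵢ = ‖A‖_*` with all `λᵢ > 0`,
so equality forces `⟪Zᵀbᵢ, Wᵀbᵢ⟫ = 1` for two vectors of norm at most one, i.e. `Zᵀbᵢ = Wᵀbᵢ`
for every `i`, and hence `Z = W`.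
-/

namespace Matrix.PosSemidef

variable {m 𝕜 : Type*} [Fintype m] [DecidableEq m] [RCLike 𝕜] {M : Matrix m m 𝕜}

open scoped MatrixOrder ComplexOrder

theorem sqrt_eq_cfcSqrt (hM : M.PosSemidef) : hM.sqrt = CFC.sqrt M := by
  rw [CFC.sqrt_eq_real_sqrt M hM.nonneg, cfcₙ_eq_cfc, hM.1.cfc_eq]
  rfl

theorem posSemidef_sqrt (hM : M.PosSemidef) : hM.sqrt.PosSemidef := by
  rw [hM.sqrt_eq_cfcSqrt]
  exact (CFC.sqrt_nonneg M).posSemidef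

theorem sqrt_mul_self (hM : M.PosSemidef) : hM.sqrt * hM.sqrt = M := by
  rw [hM.sqrt_eq_cfcSqrt]
  exact CFC.sqrt_mul_sqrt_self M hM.nonneg

theorem sqrt_eq_of_mul_self_eq (hM : M.PosSemidef) {C : Matrix m m 𝕜} (hC : C.PosSemidef)
    (h : C * C = M) : hM.sqrt = C := by
  rw [hM.sqrt_eq_cfcSqrt]
  exact CFC.sqrt_unique h hC.nonneg

theorem _root_.Matrix.PosDef.posDef_sqrt (hM : M.PosDef) : hM.posSemidef.sqrt.PosDef := by
  have hS := hM.posSemidef.posSemidef_sqrt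
  rw [hS.posDef_iff_isUnit]
  exact isUnit_of_mul_isUnit_left (hM.posSemidef.sqrt_mul_self ▸ hM.isUnit)

end Matrix.PosSemidef

section DotProduct

variable {m : Type*} [Fintype m] {R : Type*} [CommRing R]

theorem sub_dotProduct_sub_self (x y : m → R) :
    (x - y) ⬝ᵥ (x - y) = x ⬝ᵥ x + y ⬝ᵥ y - 2 * (x ⬝ᵥ y) := by
  simp only [sub_dotProduct, dotProduct_sub, dotProduct_comm y x]
  ring

variable [LinearOrder R] [IsStrictOrderedRing R]

theorem dotProduct_self_nonneg (v : m → R) : 0 ≤ v ⬝ᵥ v :=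
  Finset.sum_nonneg fun i _ => mul_self_nonneg (v i)

theorem dotProduct_le_one_of_dotProduct_self_le_one {x y : m → R} (hx : x ⬝ᵥ x ≤ 1)
    (hy : y ⬝ᵥ y ≤ 1) : x ⬝ᵥ y ≤ 1 := by
  linarith [sub_dotProduct_sub_self x y ▸ dotProduct_self_nonneg (x - y)]

theorem eq_of_dotProduct_eq_one_of_dotProduct_self_le_one {x y : m → R} (hx : x ⬝ᵥ x ≤ 1)
    (hy : y ⬝ᵥ y ≤ 1) (hxy : x ⬝ᵥ y = 1) : x = y := by
  rw [← sub_eq_zero, ← dotProduct_self_eq_zero]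
  linarith [sub_dotProduct_sub_self x y, dotProduct_self_nonneg (x - y)]

theorem dotProduct_sq_le_mul (x y : m → R) : (x ⬝ᵥ y) ^ 2 ≤ (x ⬝ᵥ x) * (y ⬝ᵥ y) := by
  simpa only [dotProduct, sq] using Finset.sum_mul_sq_le_sq_mul_sq Finset.univ x y

end DotProduct

theorem OrthonormalBasis.dotProduct_self_eq_one {m : Type*} [Fintype m]
    (b : OrthonormalBasis m ℝ (EuclideanSpace ℝ m)) (i : m) : ⇑(b i) ⬝ᵥ ⇑(b i) = 1 := by
  have h : inner ℝ (b i) (b i) = 1 := by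
    rw [real_inner_self_eq_norm_sq, b.orthonormal.1 i, one_pow]
  simpa only [EuclideanSpace.inner_eq_star_dotProduct, star_trivial] using h

namespace Matrix

variable {m : Type*} [Fintype m]

theorem trace_eq_sum_dotProduct_mulVec [DecidableEq m] (C : Matrix m m ℝ)
    (b : OrthonormalBasis m ℝ (EuclideanSpace ℝ m)) :
    C.trace = ∑ i, ⇑(b i) ⬝ᵥ C *ᵥ ⇑(b i) := by
  rw [← C.trace_toLin_eq (PiLp.basisFun 2 ℝ m), ← toLpLin_eq_toLin,
    LinearMap.trace_eq_sum_inner _ b]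
  simp [toLpLin_apply, EuclideanSpace.inner_eq_star_dotProduct, dotProduct_comm]

theorem eq_of_mulVec_orthonormalBasis {𝕜 p : Type*} [RCLike 𝕜] [DecidableEq m]
    {M N : Matrix p m 𝕜} (b : OrthonormalBasis m 𝕜 (EuclideanSpace 𝕜 m))
    (h : ∀ i, M *ᵥ ⇑(b i) = N *ᵥ ⇑(b i)) : M = N :=
  (toLpLin 2 2).injective <| b.toBasis.ext fun i => by simp [toLpLin_apply, h i]

variable {p : Type*} [Fintype p]

theorem dotProduct_mul_transpose_mulVec {R : Type*} [CommSemiring R]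
    (Z B : Matrix m p R) (u : m → R) : u ⬝ᵥ (Z * Bᵀ) *ᵥ u = Zᵀ *ᵥ u ⬝ᵥ Bᵀ *ᵥ u := by
  rw [← mulVec_mulVec, dotProduct_mulVec, ← mulVec_transpose]

theorem trace_mul_transpose {R : Type*} [NonUnitalNonAssocSemiring R] (Z B : Matrix m p R) :
    trace (Z * Bᵀ) = ∑ i, ∑ j, Z i j * B i j := by
  simp [trace, mul_apply]

end Matrix

section NuclearNorm

variable {n q : ℕ}

theorem nuclearNorm_smul {c : ℝ} (hc : 0 ≤ c) (A : Matrix (Fin n) (Fin q) ℝ) :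
    nuclearNorm (c • A) = c * nuclearNorm A := by
  have hA := posSemidef_self_mul_conjTranspose A
  have hsqrt : (posSemidef_self_mul_conjTranspose (c • A)).sqrt = c • hA.sqrt := by
    refine PosSemidef.sqrt_eq_of_mul_self_eq _ (hA.posSemidef_sqrt.smul hc) ?_
    rw [smul_mul_smul_comm, hA.sqrt_mul_self, conjTranspose_smul, star_trivial,
      Matrix.smul_mul, Matrix.mul_smul, smul_smul]
  rw [nuclearNorm, hsqrt, trace_smul, smul_eq_mul, nuclearNorm]

theorem nuclearNorm_vecMulVec (u : Fin n → ℝ) (v : Fin q → ℝ) :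
    nuclearNorm (vecMulVec u v) = √(u ⬝ᵥ u) * √(v ⬝ᵥ v) := by
  set c := √(v ⬝ᵥ v) / √(u ⬝ᵥ u)
  have hsqrt : (posSemidef_self_mul_conjTranspose (vecMulVec u v)).sqrt = c • vecMulVec u u := by
    refine PosSemidef.sqrt_eq_of_mul_self_eq _
      ((posSemidef_vecMulVec_self_star u).smul (by positivity)) ?_
    rw [smul_mul_smul_comm, conjTranspose_vecMulVec, vecMulVec_mul_vecMulVec,
      vecMulVec_mul_vecMulVec, star_trivial, star_trivial, vecMulVec_smul, vecMulVec_smul,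
      smul_smul]
    rcases eq_or_ne u 0 with rfl | hu
    · simp
    have hu : u ⬝ᵥ u ≠ 0 := dotProduct_self_eq_zero.not.mpr hu
    congr 1
    rw [div_mul_div_comm, Real.mul_self_sqrt (dotProduct_self_nonneg v),
      Real.mul_self_sqrt (dotProduct_self_nonneg u), div_mul_cancel₀ _ hu]
  rw [nuclearNorm, hsqrt, trace_smul, trace_vecMulVec, smul_eq_mul, div_mul_eq_mul_div,
    mul_div_assoc, Real.div_sqrt, mul_comm]

theorem trace_mul_transpose_le_nuclearNorm {Z : Matrix (Fin n) (Fin q) ℝ}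
    (hZ : ∀ u, Zᵀ *ᵥ u ⬝ᵥ Zᵀ *ᵥ u ≤ u ⬝ᵥ u) (B : Matrix (Fin n) (Fin q) ℝ) :
    trace (Z * Bᵀ) ≤ nuclearNorm B := by
  have hB := posSemidef_self_mul_conjTranspose B
  have hT := hB.posSemidef_sqrt
  set b := hT.1.eigenvectorBasis
  set μ := hT.1.eigenvalues
  have hBb : ∀ i, Bᵀ *ᵥ ⇑(b i) ⬝ᵥ Bᵀ *ᵥ ⇑(b i) = μ i ^ 2 := fun i => by
    rw [← dotProduct_mul_transpose_mulVec, ← conjTranspose_eq_transpose_of_trivial,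
      ← hB.sqrt_mul_self, ← mulVec_mulVec, hT.1.mulVec_eigenvectorBasis, mulVec_smul,
      hT.1.mulVec_eigenvectorBasis, smul_smul, dotProduct_smul, b.dotProduct_self_eq_one,
      smul_eq_mul, mul_one, sq]
  have hterm : ∀ i, Zᵀ *ᵥ ⇑(b i) ⬝ᵥ Bᵀ *ᵥ ⇑(b i) ≤ μ i := fun i => by
    refine (le_abs_self _).trans (abs_le_of_sq_le_sq ?_ (hT.eigenvalues_nonneg i))
    calc _ ≤ (Zᵀ *ᵥ ⇑(b i) ⬝ᵥ Zᵀ *ᵥ ⇑(b i)) * μ i ^ 2 := hBb i ▸ dotProduct_sq_le_mul _ _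
      _ ≤ 1 * μ i ^ 2 := by
        gcongr
        exact b.dotProduct_self_eq_one i ▸ hZ _
      _ = μ i ^ 2 := one_mul _
  calc trace (Z * Bᵀ) = ∑ i, Zᵀ *ᵥ ⇑(b i) ⬝ᵥ Bᵀ *ᵥ ⇑(b i) := by
        simp only [trace_eq_sum_dotProduct_mulVec _ b, dotProduct_mul_transpose_mulVec]
    _ ≤ ∑ i, μ i := Finset.sum_le_sum fun i _ => hterm i
    _ = nuclearNorm B := by simp [nuclearNorm, hT.1.trace_eq_sum_eigenvalues, μ]

theorem dotProduct_le_of_forall_trace_le_nuclearNorm {Z : Matrix (Fin n) (Fin q) ℝ}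
    (hZ : ∀ B : Matrix (Fin n) (Fin q) ℝ, trace (Z * Bᵀ) ≤ nuclearNorm B) (u : Fin n → ℝ) :
    Zᵀ *ᵥ u ⬝ᵥ Zᵀ *ᵥ u ≤ u ⬝ᵥ u := by
  set y := Zᵀ *ᵥ u
  have h := hZ (vecMulVec u y)
  rw [transpose_vecMulVec, mul_vecMulVec, trace_vecMulVec, dotProduct_comm, dotProduct_mulVec,
    ← mulVec_transpose, nuclearNorm_vecMulVec] at h
  nlinarith [Real.sq_sqrt (dotProduct_self_nonneg u), Real.sq_sqrt (dotProduct_self_nonneg y),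
    Real.sqrt_nonneg (u ⬝ᵥ u), Real.sqrt_nonneg (y ⬝ᵥ y)]

theorem inSubdiff_iff_of_homogeneous {f : Matrix (Fin n) (Fin q) ℝ → ℝ}
    (hf : ∀ c : ℝ, 0 ≤ c → ∀ B, f (c • B) = c * f B) {E Z : Matrix (Fin n) (Fin q) ℝ} :
    InSubdiff f E Z ↔
      trace (Z * Eᵀ) = f E ∧ ∀ B : Matrix (Fin n) (Fin q) ℝ, trace (Z * Bᵀ) ≤ f B := by
  have hsum : ∀ B : Matrix (Fin n) (Fin q) ℝ,
      ∑ i, ∑ j, Z i j * (B i j - E i j) = trace (Z * Bᵀ) - trace (Z * Eᵀ) := fun B => by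
    simp only [trace_mul_transpose, mul_sub, Finset.sum_sub_distrib]
  simp only [InSubdiff, ge_iff_le, hsum]
  refine ⟨fun h => ?_, fun ⟨hE, hB⟩ B => by linarith [hB B]⟩
  have hf0 : f 0 = 0 := by simpa using hf 0 le_rfl E
  have h0 := h 0
  have h2 := h ((2 : ℝ) • E)
  rw [hf0] at h0
  rw [hf 2 zero_le_two] at h2
  simp only [transpose_zero, Matrix.mul_zero, trace_zero, transpose_smul, Matrix.mul_smul,
    trace_smul, smul_eq_mul] at h0 h2
  have hE : trace (Z * Eᵀ) = f E := by linarith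
  exact ⟨hE, fun B => by linarith [h B]⟩

theorem inSubdiff_nuclearNorm_iff {A Z : Matrix (Fin n) (Fin q) ℝ} :
    InSubdiff nuclearNorm A Z ↔
      trace (Z * Aᵀ) = nuclearNorm A ∧ ∀ u, Zᵀ *ᵥ u ⬝ᵥ Zᵀ *ᵥ u ≤ u ⬝ᵥ u := by
  rw [inSubdiff_iff_of_homogeneous fun c hc B => nuclearNorm_smul hc B]
  exact and_congr_right fun _ => ⟨dotProduct_le_of_forall_trace_le_nuclearNorm,
    trace_mul_transpose_le_nuclearNorm⟩

end NuclearNorm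

namespace Matrix

variable {m p : Type*} [Fintype m] [DecidableEq m] [Fintype p] {S : Matrix m m ℝ}
  {W : Matrix m p ℝ}

theorem transpose_mulVec_dotProduct_self_of_mul_transpose_eq_one (hW : W * Wᵀ = 1)
    (u : m → ℝ) : Wᵀ *ᵥ u ⬝ᵥ Wᵀ *ᵥ u = u ⬝ᵥ u := by
  rw [← dotProduct_mul_transpose_mulVec, hW, one_mulVec]

theorem trace_mul_transpose_mul_of_mul_transpose_eq_one (hS : S.IsHermitian)
    (hW : W * Wᵀ = 1) : trace (W * (S * W)ᵀ) = S.trace := by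
  have hST : Sᵀ = S := hS
  rw [transpose_mul, hST, ← Matrix.mul_assoc, hW, Matrix.one_mul]

theorem eq_of_trace_mul_transpose_mul_eq (hS : S.PosDef) (hW : W * Wᵀ = 1)
    {Z : Matrix m p ℝ} (hZ : ∀ u, Zᵀ *ᵥ u ⬝ᵥ Zᵀ *ᵥ u ≤ u ⬝ᵥ u)
    (h : trace (Z * (S * W)ᵀ) = S.trace) : Z = W := by
  set b := hS.1.eigenvectorBasis
  set μ := hS.1.eigenvalues
  have hZb : ∀ i, Zᵀ *ᵥ ⇑(b i) ⬝ᵥ Zᵀ *ᵥ ⇑(b i) ≤ 1 := fun i =>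
    b.dotProduct_self_eq_one i ▸ hZ _
  have hWb : ∀ i, Wᵀ *ᵥ ⇑(b i) ⬝ᵥ Wᵀ *ᵥ ⇑(b i) ≤ 1 := fun i => by
    rw [transpose_mulVec_dotProduct_self_of_mul_transpose_eq_one hW, b.dotProduct_self_eq_one]
  have htrace : trace (Z * (S * W)ᵀ) = ∑ i, μ i * (Zᵀ *ᵥ ⇑(b i) ⬝ᵥ Wᵀ *ᵥ ⇑(b i)) := by
    have hST : Sᵀ = S := hS.1
    rw [trace_eq_sum_dotProduct_mulVec _ b]
    refine Finset.sum_congr rfl fun i _ => ?_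
    rw [dotProduct_mul_transpose_mulVec, transpose_mul, hST, ← mulVec_mulVec,
      hS.1.mulVec_eigenvectorBasis, mulVec_smul, dotProduct_smul, smul_eq_mul]
  have hsum : ∑ i, μ i * (1 - Zᵀ *ᵥ ⇑(b i) ⬝ᵥ Wᵀ *ᵥ ⇑(b i)) = 0 := by
    simp only [mul_sub, mul_one, Finset.sum_sub_distrib, ← htrace, h]
    simp [hS.1.trace_eq_sum_eigenvalues, μ]
  have hle : ∀ i, Zᵀ *ᵥ ⇑(b i) ⬝ᵥ Wᵀ *ᵥ ⇑(b i) ≤ 1 := fun i =>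
    dotProduct_le_one_of_dotProduct_self_le_one (hZb i) (hWb i)
  have hdot : ∀ i, Zᵀ *ᵥ ⇑(b i) ⬝ᵥ Wᵀ *ᵥ ⇑(b i) = 1 := fun i => by
    have hi := (Finset.sum_eq_zero_iff_of_nonneg fun i _ =>
      mul_nonneg (hS.eigenvalues_pos i).le (sub_nonneg.2 (hle i))).1 hsum i (Finset.mem_univ i)
    rw [mul_eq_zero, sub_eq_zero] at hi
    exact (hi.resolve_left (hS.eigenvalues_pos i).ne').symm
  have hT : Zᵀ = Wᵀ := eq_of_mulVec_orthonormalBasis b fun i =>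
    eq_of_dotProduct_eq_one_of_dotProduct_self_le_one (hZb i) (hWb i) (hdot i)
  exact transpose_injective hT

theorem mul_transpose_eq_one_of_mul_self_eq (hS : S.PosDef) {A : Matrix m p ℝ}
    (hSA : S * S = A * Aᵀ) : S⁻¹ * A * (S⁻¹ * A)ᵀ = 1 := by
  have hST : Sᵀ = S := hS.1
  have hdet : IsUnit S.det := (isUnit_iff_isUnit_det S).1 hS.isUnit
  rw [transpose_mul, transpose_nonsing_inv, hST, Matrix.mul_assoc, ← Matrix.mul_assoc A,
    ← hSA, ← Matrix.mul_assoc, nonsing_inv_mul_cancel_left S S hdet, mul_nonsing_inv S hdet]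

end Matrix

theorem subdiff_nuclearNorm_general {n q : ℕ}
    (A : Matrix (Fin n) (Fin q) ℝ)
    (hinv : IsUnit (A * Aᵀ).det) :
    {Z : Matrix (Fin n) (Fin q) ℝ | InSubdiff nuclearNorm A Z} =
      {((Matrix.posSemidef_self_mul_conjTranspose A).sqrt)⁻¹ * A} := by
  have hAA := posSemidef_self_mul_conjTranspose A
  have hS : hAA.sqrt.PosDef :=
    (hAA.posDef_iff_isUnit.2 ((isUnit_iff_isUnit_det _).2 hinv)).posDef_sqrt
  have hSW : hAA.sqrt * (hAA.sqrt⁻¹ * A) = A :=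
    mul_nonsing_inv_cancel_left _ A ((isUnit_iff_isUnit_det _).1 hS.isUnit)
  have hW := mul_transpose_eq_one_of_mul_self_eq hS hAA.sqrt_mul_self
  ext Z
  rw [Set.mem_ofPred_eq, inSubdiff_nuclearNorm_iff, Set.mem_singleton_iff]
  constructor
  · rintro ⟨htrace, hZ⟩
    exact eq_of_trace_mul_transpose_mul_eq hS hW hZ (by rw [hSW]; exact htrace)
  · rintro rfl
    refine ⟨?_, fun u => (transpose_mulVec_dotProduct_self_of_mul_transpose_eq_one hW u).le⟩
    have := trace_mul_transpose_mul_of_mul_transpose_eq_one hS.1 hW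
    rwa [hSW] at this

/-- For a full-rank `A ∈ ℝ^{n×q}` with `n ≤ q` (so `AAᵀ` invertible), the
subdifferential of the nuclear norm at `A` is the singleton `{(AAᵀ)^{−1/2} A}`. -/
theorem subdiff_nuclearNorm {n q : ℕ} (hnq : n ≤ q)
    (A : Matrix (Fin n) (Fin q) ℝ)
    (hinv : IsUnit (A * Aᵀ).det) :
    {Z : Matrix (Fin n) (Fin q) ℝ | InSubdiff nuclearNorm A Z} =
      {((Matrix.posSemidef_self_mul_conjTranspose A).sqrt)⁻¹ * A} :=
  subdiff_nuclearNorm_general A hinv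
end

section
/- Fix σ_min, σ_max with 0 < σ_min ≤ σ_max and Ê ∈ ℝ^{n×q} with SVD (1/√q)Ê = U diag(γᵢ) Vᵀ (UᵀU = VᵀV = Id_n). The minimizer over symmetric matrices S with σ_min·Id ⪯ S ⪯ σ_max·Id of the function S ↦ (1/(2q))·Tr(Êᵀ S⁻¹ Ê) + (1/2)·Tr(S) is S = U diag(clip(γᵢ, σ_min, σ_max)) Uᵀ. -/
open scoped BigOperators
open Matrix Classical

/-- Clipping of `γ` at levels `a ≤ b`. -/
noncomputable def clip (γ a b : ℝ) : ℝ := max a (min γ b)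

/-!
Conjugating by the orthogonal matrix `U` turns a feasible `S` into `M = Uᵀ S U`, with the same
Loewner bounds, and the objective into `½ ∑ᵢ (γᵢ² (M⁻¹)ᵢᵢ + Mᵢᵢ)`. For positive definite `M` one has
`(M⁻¹)ᵢᵢ ≥ 1 / Mᵢᵢ`, so the objective is at least `½ ∑ᵢ (γᵢ² / Mᵢᵢ + Mᵢᵢ)` with
`Mᵢᵢ ∈ [σmin, σmax]`. Each summand `t ↦ γᵢ² / t + t` is minimised on that interval at
`clip(γᵢ, σmin, σmax)`, and `M = diag(clip(γᵢ, σmin, σmax))` attains all these bounds at once.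
-/

lemma le_clip (γ a b : ℝ) : a ≤ clip γ a b := le_max_left _ _

lemma clip_le {a b : ℝ} (γ : ℝ) (hab : a ≤ b) : clip γ a b ≤ b := max_le hab (min_le_right _ _)

lemma sq_div_add_le_sq_div_add {c t g : ℝ} (hc : 0 < c) (ht : 0 < t)
    (h : 0 ≤ (t - c) * (t * c - g ^ 2)) : g ^ 2 / c + c ≤ g ^ 2 / t + t := by
  have hdiff : g ^ 2 / t + t - (g ^ 2 / c + c) = (t - c) * (t * c - g ^ 2) / (t * c) := by
    field_simp; ring
  nlinarith [div_nonneg h (mul_pos ht hc).le]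

lemma sq_div_clip_add_clip_le {a b g t : ℝ} (ha : 0 < a) (hab : a ≤ b) (hg : 0 ≤ g)
    (hat : a ≤ t) (htb : t ≤ b) : g ^ 2 / clip g a b + clip g a b ≤ g ^ 2 / t + t := by
  have ht : 0 < t := ha.trans_le hat
  rcases le_total g a with hga | hag
  · rw [show clip g a b = a by rw [clip, min_eq_left (hga.trans hab), max_eq_left hga]]
    refine sq_div_add_le_sq_div_add ha ht (mul_nonneg (sub_nonneg.2 hat) ?_)
    nlinarith [mul_le_mul hga hga hg ha.le, mul_le_mul_of_nonneg_right hat ha.le]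
  rcases le_total g b with hgb | hbg
  · rw [show clip g a b = g by rw [clip, min_eq_left hgb, max_eq_right hag]]
    exact sq_div_add_le_sq_div_add (ha.trans_le hag) ht (by nlinarith [sq_nonneg (t - g)])
  · rw [show clip g a b = b by rw [clip, min_eq_right hbg, max_eq_right hab]]
    refine sq_div_add_le_sq_div_add (ha.trans_le hab) ht ?_
    nlinarith [mul_nonneg (sub_nonneg.2 htb) (by nlinarith : (0 : ℝ) ≤ g ^ 2 - t * b)]

namespace Matrix

variable {ι m κ : Type*}

section Loewner

variable [DecidableEq ι]

lemma PosSemidef.le_diag_of_sub_smul_one {A : Matrix ι ι ℝ} {a : ℝ}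
    (h : (A - a • 1).PosSemidef) (i : ι) : a ≤ A i i := by
  simpa using h.diag_nonneg (i := i)

lemma PosSemidef.diag_le_of_smul_one_sub {A : Matrix ι ι ℝ} {a : ℝ}
    (h : (a • 1 - A).PosSemidef) (i : ι) : A i i ≤ a := by
  simpa using h.diag_nonneg (i := i)

lemma PosDef.of_posSemidef_sub_smul_one {A : Matrix ι ι ℝ} {a : ℝ} (ha : 0 < a)
    (h : (A - a • 1).PosSemidef) : A.PosDef := by
  have hpos : (a • (1 : Matrix ι ι ℝ)).PosDef := by
    rw [smul_one_eq_diagonal]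
    exact PosDef.diagonal fun _ => ha
  simpa using PosDef.posSemidef_add h hpos

variable [Fintype ι]

-- Nonnegativity of the quadratic form at `s • eᵢ - A⁻¹ eᵢ` with `s = (A i i)⁻¹`.
lemma PosDef.inv_diag_le_diag_inv {A : Matrix ι ι ℝ} (hA : A.PosDef) (i : ι) :
    (A i i)⁻¹ ≤ A⁻¹ i i := by
  set e : ι → ℝ := Pi.single i 1
  set v := A⁻¹ *ᵥ e
  set s := (A i i)⁻¹
  have hAv : A *ᵥ v = e := by
    rw [mulVec_mulVec, mul_nonsing_inv _ (isUnit_iff_ne_zero.2 hA.det_pos.ne'), one_mulVec]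
  have hsymm : Aᵀ = A := by simpa using hA.isHermitian.eq
  have hvAe : v ⬝ᵥ (A *ᵥ e) = 1 := by
    rw [dotProduct_mulVec, ← hsymm, vecMul_transpose, hAv]
    simp [e]
  have heAe : e ⬝ᵥ (A *ᵥ e) = A i i := by simp [e, mulVec_single]
  have hve : v ⬝ᵥ e = A⁻¹ i i := by simp [v, e, mulVec_single]
  have hee : e ⬝ᵥ e = 1 := by simp [e]
  have hquad := hA.posSemidef.dotProduct_mulVec_nonneg (s • e - v)
  rw [star_trivial, mulVec_sub, mulVec_smul, hAv, sub_dotProduct, dotProduct_sub, dotProduct_sub,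
    smul_dotProduct, smul_dotProduct, dotProduct_smul, dotProduct_smul, heAe, hvAe, hee,
    hve] at hquad
  have hs : s * (s * A i i) = s := by rw [inv_mul_cancel₀ hA.diag_pos.ne', mul_one]
  simp only [smul_eq_mul] at hquad
  linarith

lemma sum_sq_div_clip_add_clip_le {M : Matrix ι ι ℝ} {a b : ℝ} (ha : 0 < a) (hab : a ≤ b)
    (hlo : (M - a • 1).PosSemidef) (hhi : (b • 1 - M).PosSemidef)
    {γ : ι → ℝ} (hγ : ∀ i, 0 ≤ γ i) :
    ∑ i, (γ i ^ 2 / clip (γ i) a b + clip (γ i) a b) ≤ ∑ i, (γ i ^ 2 * M⁻¹ i i + M i i) := by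
  refine Finset.sum_le_sum fun i _ => ?_
  calc γ i ^ 2 / clip (γ i) a b + clip (γ i) a b
      ≤ γ i ^ 2 / M i i + M i i :=
        sq_div_clip_add_clip_le ha hab (hγ i) (hlo.le_diag_of_sub_smul_one i)
          (hhi.diag_le_of_smul_one_sub i)
    _ ≤ γ i ^ 2 * M⁻¹ i i + M i i := by
        rw [div_eq_mul_inv]
        gcongr
        exact (PosDef.of_posSemidef_sub_smul_one ha hlo).inv_diag_le_diag_inv i

end Loewner

section Orthogonal

variable [Fintype ι] [Fintype m] [Fintype κ]

lemma trace_smul_transpose_mul_mul_smul (c : ℝ) (E : Matrix m κ ℝ) (B : Matrix m m ℝ) :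
    ((c • E)ᵀ * B * (c • E)).trace = c ^ 2 * (Eᵀ * B * E).trace := by
  simp only [transpose_smul, Matrix.smul_mul, Matrix.mul_smul, smul_smul, trace_smul,
    smul_eq_mul, sq]

lemma PosSemidef.transpose_mul_mul_same {A : Matrix m m ℝ} (hA : A.PosSemidef)
    (U : Matrix m ι ℝ) : (Uᵀ * A * U).PosSemidef := by
  simpa using hA.conjTranspose_mul_mul_same U

variable [DecidableEq ι]

lemma trace_transpose_mul_mul_of_svd {U : Matrix m ι ℝ} {V : Matrix κ ι ℝ} (hV : Vᵀ * V = 1)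
    (γ : ι → ℝ) (B : Matrix m m ℝ) :
    ((U * diagonal γ * Vᵀ)ᵀ * B * (U * diagonal γ * Vᵀ)).trace =
      ∑ i, γ i ^ 2 * (Uᵀ * B * U) i i := by
  have hprod : (U * diagonal γ * Vᵀ)ᵀ * B * (U * diagonal γ * Vᵀ)
      = V * (diagonal γ * (Uᵀ * B * U) * diagonal γ) * Vᵀ := by
    simp only [transpose_mul, diagonal_transpose, transpose_transpose, Matrix.mul_assoc]
  rw [hprod, trace_mul_cycle, ← Matrix.mul_assoc, hV, Matrix.one_mul]
  simp only [trace, diag_apply, mul_diagonal, diagonal_mul]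
  exact Fintype.sum_congr _ _ fun i => by ring

lemma posSemidef_mul_diagonal_mul_transpose_sub {d d' : ι → ℝ} (h : d' ≤ d) (U : Matrix m ι ℝ) :
    (U * diagonal d * Uᵀ - U * diagonal d' * Uᵀ).PosSemidef := by
  rw [← Matrix.sub_mul, ← Matrix.mul_sub, diagonal_sub, ← conjTranspose_eq_transpose_of_trivial]
  exact (PosSemidef.diagonal (sub_nonneg.2 h)).mul_mul_conjTranspose_same U

lemma inv_diagonal_of_ne_zero {d : ι → ℝ} (hd : ∀ i, d i ≠ 0) : (diagonal d)⁻¹ = diagonal d⁻¹ := by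
  refine inv_eq_left_inv ?_
  rw [diagonal_mul_diagonal, ← diagonal_one]
  exact congrArg diagonal (funext fun i => inv_mul_cancel₀ (hd i))

variable {U : Matrix ι ι ℝ}

lemma smul_one_eq_mul_diagonal_mul_transpose (hU : U * Uᵀ = 1) (a : ℝ) :
    a • (1 : Matrix ι ι ℝ) = U * diagonal (fun _ => a) * Uᵀ := by
  rw [← smul_one_eq_diagonal, Matrix.mul_smul, Matrix.mul_one, Matrix.smul_mul, hU]

lemma transpose_mul_smul_one_mul (hU : Uᵀ * U = 1) (a : ℝ) : Uᵀ * (a • 1) * U = a • 1 := by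
  rw [Matrix.mul_smul, Matrix.mul_one, Matrix.smul_mul, hU]

lemma PosSemidef.transpose_mul_mul_sub_smul_one (hU : Uᵀ * U = 1) {A : Matrix ι ι ℝ} {a : ℝ}
    (h : (A - a • 1).PosSemidef) : (Uᵀ * A * U - a • 1).PosSemidef := by
  simpa only [Matrix.mul_sub, Matrix.sub_mul, transpose_mul_smul_one_mul hU]
    using h.transpose_mul_mul_same U

lemma PosSemidef.smul_one_sub_transpose_mul_mul (hU : Uᵀ * U = 1) {A : Matrix ι ι ℝ} {a : ℝ}
    (h : (a • 1 - A).PosSemidef) : (a • 1 - Uᵀ * A * U).PosSemidef := by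
  simpa only [Matrix.mul_sub, Matrix.sub_mul, transpose_mul_smul_one_mul hU]
    using h.transpose_mul_mul_same U

lemma inv_transpose_mul_mul (hU : Uᵀ * U = 1) (A : Matrix ι ι ℝ) :
    (Uᵀ * A * U)⁻¹ = Uᵀ * A⁻¹ * U := by
  rw [Matrix.mul_inv_rev, Matrix.mul_inv_rev, inv_eq_left_inv hU, ← transpose_nonsing_inv,
    inv_eq_left_inv hU, transpose_transpose, Matrix.mul_assoc]

lemma trace_transpose_mul_mul (hU : U * Uᵀ = 1) (A : Matrix ι ι ℝ) :
    (Uᵀ * A * U).trace = A.trace := by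
  rw [trace_mul_cycle, hU, Matrix.one_mul]

end Orthogonal

end Matrix

lemma concomitant_objective_eq_sum {ι κ : Type*} [Fintype ι] [Fintype κ] [DecidableEq ι]
    {q : ℝ} (hq : 0 ≤ q) {E : Matrix ι κ ℝ} {U : Matrix ι ι ℝ} {V : Matrix κ ι ℝ} {γ : ι → ℝ}
    (hU : Uᵀ * U = 1) (hV : Vᵀ * V = 1) (hsvd : (1 / √q) • E = U * diagonal γ * Vᵀ)
    (S : Matrix ι ι ℝ) :
    1 / (2 * q) * (Eᵀ * S⁻¹ * E).trace + 1 / 2 * S.trace =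
      1 / 2 * ∑ i, (γ i ^ 2 * (Uᵀ * S * U)⁻¹ i i + (Uᵀ * S * U) i i) := by
  have hscale : 1 / (2 * q) * (Eᵀ * S⁻¹ * E).trace =
      1 / 2 * (((1 / √q) • E)ᵀ * S⁻¹ * ((1 / √q) • E)).trace := by
    rw [trace_smul_transpose_mul_mul_smul, div_pow, Real.sq_sqrt hq]
    ring
  rw [hscale, hsvd, trace_transpose_mul_mul_of_svd hV, inv_transpose_mul_mul hU,
    ← trace_transpose_mul_mul (mul_eq_one_comm.mp hU) S, Finset.sum_add_distrib, mul_add]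
  rfl

theorem smoothed_concomitant_noise_minimizer_general {n q : ℕ}
    (σmin σmax : ℝ) (h1 : 0 < σmin) (h2 : σmin ≤ σmax)
    (Ehat : Matrix (Fin n) (Fin q) ℝ)
    (U : Matrix (Fin n) (Fin n) ℝ) (V : Matrix (Fin q) (Fin n) ℝ)
    (γ : Fin n → ℝ) (hγ : ∀ i, 0 ≤ γ i)
    (hU : Uᵀ * U = 1) (hV : Vᵀ * V = 1)
    (hsvd : (1 / Real.sqrt q) • Ehat = U * Matrix.diagonal γ * Vᵀ) :
    (let Shat := U * Matrix.diagonal (fun i => clip (γ i) σmin σmax) * Uᵀ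
     (Shat.IsHermitian ∧ (Shat - σmin • (1 : Matrix (Fin n) (Fin n) ℝ)).PosSemidef ∧
        (σmax • (1 : Matrix (Fin n) (Fin n) ℝ) - Shat).PosSemidef) ∧
      ∀ S : Matrix (Fin n) (Fin n) ℝ, S.IsHermitian →
        (S - σmin • (1 : Matrix (Fin n) (Fin n) ℝ)).PosSemidef →
        (σmax • (1 : Matrix (Fin n) (Fin n) ℝ) - S).PosSemidef →
        (1 / (2 * (q : ℝ))) * (Ehatᵀ * Shat⁻¹ * Ehat).trace + (1 / 2) * Shat.trace ≤
          (1 / (2 * (q : ℝ))) * (Ehatᵀ * S⁻¹ * Ehat).trace + (1 / 2) * S.trace) := by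
  intro Shat
  set c : Fin n → ℝ := fun i => clip (γ i) σmin σmax
  have hUt : U * Uᵀ = 1 := mul_eq_one_comm.mp hU
  have hShat : Uᵀ * Shat * U = diagonal c := by
    simp only [Shat, ← Matrix.mul_assoc, hU, Matrix.one_mul]
    rw [Matrix.mul_assoc, hU, Matrix.mul_one]
  refine ⟨⟨by simpa using isHermitian_mul_mul_conjTranspose U (isHermitian_diagonal c), ?_, ?_⟩,
    fun S _ hlo hhi => ?_⟩
  · rw [smul_one_eq_mul_diagonal_mul_transpose hUt]
    exact posSemidef_mul_diagonal_mul_transpose_sub (fun i => le_clip _ _ _) U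
  · rw [smul_one_eq_mul_diagonal_mul_transpose hUt]
    exact posSemidef_mul_diagonal_mul_transpose_sub (fun i => clip_le _ h2) U
  have hq : (0 : ℝ) ≤ q := q.cast_nonneg
  rw [concomitant_objective_eq_sum hq hU hV hsvd, concomitant_objective_eq_sum hq hU hV hsvd,
    hShat]
  have hc : ∀ i, c i ≠ 0 := fun i => (h1.trans_le (le_clip _ _ _)).ne'
  have hclip : ∀ i, γ i ^ 2 * (diagonal c)⁻¹ i i + diagonal c i i = γ i ^ 2 / c i + c i := by
    simp [inv_diagonal_of_ne_zero hc, div_eq_mul_inv]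
  simp only [hclip]
  gcongr 1 / 2 * ?_
  exact sum_sq_div_clip_add_clip_le h1 h2 (hlo.transpose_mul_mul_sub_smul_one hU)
    (hhi.smul_one_sub_transpose_mul_mul hU) hγ

/-- The minimizer over `σmin·Id ⪯ S ⪯ σmax·Id` of
`S ↦ (1/(2q))Tr(Êᵀ S⁻¹ Ê) + (1/2)Tr(S)` is `U diag(clip(γᵢ, σmin, σmax)) Uᵀ`. -/
theorem smoothed_concomitant_noise_minimizer {n q : ℕ} (hq : 0 < q)
    (σmin σmax : ℝ) (h1 : 0 < σmin) (h2 : σmin ≤ σmax)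
    (Ehat : Matrix (Fin n) (Fin q) ℝ)
    (U : Matrix (Fin n) (Fin n) ℝ) (V : Matrix (Fin q) (Fin n) ℝ)
    (γ : Fin n → ℝ) (hγ : ∀ i, 0 ≤ γ i)
    (hU : Uᵀ * U = 1) (hV : Vᵀ * V = 1)
    (hsvd : (1 / Real.sqrt q) • Ehat = U * Matrix.diagonal γ * Vᵀ) :
    (let Shat := U * Matrix.diagonal (fun i => clip (γ i) σmin σmax) * Uᵀ
     (Shat.IsHermitian ∧ (Shat - σmin • (1 : Matrix (Fin n) (Fin n) ℝ)).PosSemidef ∧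
        (σmax • (1 : Matrix (Fin n) (Fin n) ℝ) - Shat).PosSemidef) ∧
      ∀ S : Matrix (Fin n) (Fin n) ℝ, S.IsHermitian →
        (S - σmin • (1 : Matrix (Fin n) (Fin n) ℝ)).PosSemidef →
        (σmax • (1 : Matrix (Fin n) (Fin n) ℝ) - S).PosSemidef →
        (1 / (2 * (q : ℝ))) * (Ehatᵀ * Shat⁻¹ * Ehat).trace + (1 / 2) * Shat.trace ≤
          (1 / (2 * (q : ℝ))) * (Ehatᵀ * S⁻¹ * Ehat).trace + (1 / 2) * S.trace) :=
  smoothed_concomitant_noise_minimizer_general σmin σmax h1 h2 Ehat U V γ hγ hU hV hsvd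
end
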